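/- Let S and R be finite sets, N a real S×R matrix, W = range(N), W^⊥ = ker(Nᵀ), and fix distinct i, o ∈ S. Then the supremum of the set {u_o : u ∈ W^⊥, and there exist w ∈ W and a strictly positive c̄ ∈ ℝ^S with u − e_i = diag(1/c̄)·w} is at least the supremum of the set {u_o : u is elementary in W^⊥ and u_i = 1} ∪ {0}. -/

import Mathlib

open Matrix

/-- A vector `v` is elementary in a linear subspace `V ⊆ ℝ^S` if `v ∈ V`, `v ≠ 0`, and no
nonzero `v' ∈ V` has support strictly contained in the support of `v`. -/
def IsElementary {S : Type*} (V : Submodule ℝ (S → ℝ)) (v : S → ℝ) : Prop :=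
  v ∈ V ∧ v ≠ 0 ∧ ∀ v' ∈ V, v' ≠ 0 → ¬ Function.support v' ⊂ Function.support v

/-!
The achievable vectors `u` are the projections of `eᵢ` onto `W^⊥ = ker Nᵀ` for the inner products
weighted by `c̄`: `∑ c̄ₛ vₛ (u - eᵢ)ₛ = 0` for all `v ∈ W^⊥`.

Upper bound: decompose `u` into elementary vectors `e` of `W^⊥` conforming to it. Each has
`∑ c̄ₛ eₛ uₛ = c̄ᵢ eᵢ > 0`, so `e / eᵢ` is one of the finitely many normalised elementary vectors
and `e_o ≤ M eᵢ`, where `M ≥ 0` bounds them all; summing, `u_o ≤ M uᵢ ≤ M`. This bound is needed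
since `sSup` of a set unbounded above is `0`.

Lower bound: for an elementary `v` with `vᵢ = 1`, give weight `1` where `v = eᵢ` and a tiny weight
elsewhere. Pythagoras makes the projection close to `v` on the first set of coordinates, and there
they determine vectors of `W^⊥` continuously because `v` is elementary. Weighting `i` alone by a
tiny weight similarly makes `u_o` close to `0`.
-/

open Function

section

variable {S : Type*}

def Conforms (e v : S → ℝ) : Prop := ∀ s, e s ≠ 0 → 0 < e s * v s

namespace Conforms

variable {e v w : S → ℝ}

theorem refl (v : S → ℝ) : Conforms v v := fun _ hv => mul_self_pos.2 hv

theorem trans (hev : Conforms e v) (hvw : Conforms v w) : Conforms e w := by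
  intro s hes
  have hev' := hev s hes
  have hvw' := hvw s (right_ne_zero_of_mul hev'.ne')
  nlinarith [sq_nonneg (v s), mul_pos hev' hvw']

theorem smul (h : Conforms e v) {t : ℝ} (ht : 0 < t) : Conforms (t • e) v := by
  intro s hs
  rw [Pi.smul_apply, smul_eq_mul] at hs ⊢
  rw [mul_assoc]
  exact mul_pos ht (h s (right_ne_zero_of_mul hs))

theorem mul_nonneg (h : Conforms e v) (s : S) : 0 ≤ e s * v s := by
  rcases eq_or_ne (e s) 0 with hs | hs
  · simp [hs]
  · exact (h s hs).le

theorem support_subset (h : Conforms e v) : support e ⊆ support v :=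
  fun s hs => right_ne_zero_of_mul (h s hs).ne'

theorem exists_pos (h : Conforms e v) (he : e ≠ 0) : ∃ s, 0 < e s * v s := by
  obtain ⟨s, hs⟩ := Function.ne_iff.1 he
  exact ⟨s, h s hs⟩

end Conforms

/-- The ratio test of the simplex method: move from `v` along `-d` until the first coordinate
of `v` vanishes. -/
theorem exists_conforms_sub_smul [Finite S] {v d : S → ℝ} (hd : support d ⊆ support v)
    (hdv : ∃ s, 0 < d s * v s) :
    ∃ t : ℝ, 0 < t ∧ Conforms (v - t • d) v ∧ support (v - t • d) ⊂ support v := by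
  obtain ⟨s₀, hs₀, hmin⟩ :=
    Set.exists_min_image {s | 0 < d s * v s} (fun s => v s / d s) (Set.toFinite _) hdv
  have hd₀ : d s₀ ≠ 0 := left_ne_zero_of_mul (ne_of_gt hs₀)
  set t := v s₀ / d s₀
  have ht : 0 < t := by
    rw [show t = d s₀ * v s₀ / d s₀ ^ 2 by simp only [t]; field_simp]
    exact div_pos hs₀ (by positivity)
  have hsub : support (v - t • d) ⊆ support v := fun s hs hvs => hs <| by
    simp [hvs, notMem_support.1 fun h => hd h hvs]
  refine ⟨t, ht, fun s hs => ?_, (Set.ssubset_iff_of_subset hsub).2 ⟨s₀, hd hd₀, ?_⟩⟩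
  · refine lt_of_le_of_ne ?_ (mul_ne_zero hs (hsub hs)).symm
    simp only [Pi.sub_apply, Pi.smul_apply, smul_eq_mul]
    rcases le_or_gt (d s * v s) 0 with hneg | hpos
    · nlinarith [sq_nonneg (v s)]
    · have hds : d s ≠ 0 := left_ne_zero_of_mul hpos.ne'
      have hratio := mul_le_mul_of_nonneg_right (hmin s hpos) hpos.le
      rw [show v s / d s * (d s * v s) = v s * v s by field_simp] at hratio
      nlinarith
  · simp [t, div_mul_cancel₀ _ hd₀]

namespace IsElementary

variable {V : Submodule ℝ (S → ℝ)} {u v : S → ℝ}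

theorem smul (hu : IsElementary V u) {t : ℝ} (ht : t ≠ 0) : IsElementary V (t • u) := by
  obtain ⟨hmem, hne, hmin⟩ := hu
  refine ⟨V.smul_mem t hmem, smul_ne_zero ht hne, ?_⟩
  rw [support_const_smul_of_ne_zero t u ht]
  exact hmin

theorem exists_eq_smul (hu : IsElementary V u) (hv : v ∈ V) (hvu : support v ⊆ support u) :
    ∃ t : ℝ, v = t • u := by
  obtain ⟨s₀, hs₀⟩ := Function.ne_iff.1 hu.2.1
  refine ⟨v s₀ / u s₀, by_contra fun hne => hu.2.2 _ (V.sub_mem hv (V.smul_mem _ hu.1))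
    (sub_ne_zero.2 hne) ((Set.ssubset_iff_of_subset ?_).2 ⟨s₀, hs₀, ?_⟩)⟩
  · exact (support_sub v _).trans (Set.union_subset hvu (support_const_smul_subset _ u))
  · simp_all

theorem eq_zero_of_support_subset (hu : IsElementary V u) (hv : v ∈ V)
    (hvu : support v ⊆ support u) {i : S} (hui : u i ≠ 0) (hvi : v i = 0) : v = 0 := by
  obtain ⟨t, rfl⟩ := hu.exists_eq_smul hv hvu
  simp_all

theorem finite_setOf_apply_eq_one [Finite S] (V : Submodule ℝ (S → ℝ)) (i : S) :
    {u | IsElementary V u ∧ u i = 1}.Finite := by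
  refine Set.Finite.of_finite_image (f := support) (Set.toFinite _) fun u hu v hv huv => ?_
  obtain ⟨t, rfl⟩ := hu.1.exists_eq_smul hv.1.1 huv.ge
  have ht : t = 1 := by simpa [hu.2] using hv.2
  simp [ht]

end IsElementary

theorem exists_isElementary_conforms [Finite S] {V : Submodule ℝ (S → ℝ)} {v : S → ℝ}
    (hv : v ∈ V) (hv0 : v ≠ 0) : ∃ e, IsElementary V e ∧ Conforms e v := by
  induction hn : (support v).ncard using Nat.strong_induction_on generalizing v with
  | _ n ih =>
  by_cases hel : IsElementary V v
  · exact ⟨v, hel, Conforms.refl v⟩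
  obtain ⟨z, hz, hz0, hzv⟩ : ∃ z ∈ V, z ≠ 0 ∧ support z ⊂ support v := by
    simpa [IsElementary, hv, hv0] using hel
  obtain ⟨s₀, hs₀⟩ := Function.ne_iff.1 hz0
  obtain ⟨d, hd, hdz, hdv⟩ : ∃ d ∈ V, support d = support z ∧ ∃ s, 0 < d s * v s := by
    rcases (mul_ne_zero hs₀ (hzv.1 hs₀)).lt_or_gt with h | h
    · exact ⟨-z, V.neg_mem hz, support_neg z, s₀, by simpa using h⟩
    · exact ⟨z, hz, rfl, s₀, h⟩
  obtain ⟨t, -, hconf, hlt⟩ := exists_conforms_sub_smul (hdz ▸ hzv.1) hdv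
  obtain ⟨s₁, hs₁v, hs₁z⟩ := Set.exists_of_ssubset hzv
  have hne : v - t • d ≠ 0 := Function.ne_iff.2 ⟨s₁, by
    simpa [notMem_support.1 (hdz ▸ hs₁z : s₁ ∉ support d)] using hs₁v⟩
  obtain ⟨e, he, hee⟩ := ih _ (hn ▸ Set.ncard_lt_ncard hlt) (V.sub_mem hv (V.smul_mem t hd)) hne rfl
  exact ⟨e, he, hee.trans hconf⟩

theorem mem_closure_isElementary_conforms [Finite S] {V : Submodule ℝ (S → ℝ)} {v : S → ℝ}
    (hv : v ∈ V) : v ∈ AddSubmonoid.closure {e | IsElementary V e ∧ Conforms e v} := by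
  induction hn : (support v).ncard using Nat.strong_induction_on generalizing v with
  | _ n ih =>
  rcases eq_or_ne v 0 with rfl | hv0
  · exact zero_mem _
  obtain ⟨e, he, hev⟩ := exists_isElementary_conforms hv hv0
  obtain ⟨t, ht, hconf, hlt⟩ := exists_conforms_sub_smul hev.support_subset (hev.exists_pos he.2.1)
  have hrest := ih _ (hn ▸ Set.ncard_lt_ncard hlt) (V.sub_mem hv (V.smul_mem t he.1)) rfl
  have hsum : t • e + (v - t • e) ∈ AddSubmonoid.closure {e | IsElementary V e ∧ Conforms e v} :=
    add_mem (AddSubmonoid.subset_closure ⟨he.smul ht.ne', hev.smul ht⟩)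
      (AddSubmonoid.closure_mono (Set.ofPred_subset_ofPred.2 fun f hf => ⟨hf.1, hf.2.trans hconf⟩)
        hrest)
  rwa [add_sub_cancel] at hsum

section WeightedProjection

variable {R : Type*} [Fintype S] [Fintype R] {N : Matrix S R ℝ}

theorem dotProduct_eq_zero_of_mem_ker_transpose {u w : S → ℝ}
    (hu : u ∈ LinearMap.ker Nᵀ.mulVecLin) (hw : w ∈ LinearMap.range N.mulVecLin) :
    u ⬝ᵥ w = 0 := by
  obtain ⟨r, rfl⟩ := hw
  have hu : Nᵀ *ᵥ u = 0 := hu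
  rw [mulVecLin_apply, dotProduct_mulVec, ← mulVec_transpose, hu, zero_dotProduct]

variable (N) in
/-- `u` is the orthogonal projection of `x` onto `ker Nᵀ` for the inner product weighted by `c`:
the residual `c * (u - x)` lies in `range N = (ker Nᵀ)ᗮ`. -/
def IsWeightedProjection (c x u : S → ℝ) : Prop :=
  u ∈ LinearMap.ker Nᵀ.mulVecLin ∧ ∃ w ∈ LinearMap.range N.mulVecLin, u - x = fun s => w s / c s

variable (N) in
theorem finrank_ker_transpose_add_finrank_range :
    Module.finrank ℝ (LinearMap.ker Nᵀ.mulVecLin) + Module.finrank ℝ (LinearMap.range N.mulVecLin)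
      = Fintype.card S := by
  rw [← Module.finrank_fintype_fun_eq_card ℝ,
    ← LinearMap.finrank_range_add_finrank_ker Nᵀ.mulVecLin, add_comm]
  congr 1
  exact (rank_transpose N).symm

namespace IsWeightedProjection

variable {c x u v : S → ℝ}

theorem sum_mul_sub_eq_zero (h : IsWeightedProjection N c x u) (hc : ∀ s, c s ≠ 0)
    (hv : v ∈ LinearMap.ker Nᵀ.mulVecLin) : ∑ s, c s * v s * (u s - x s) = 0 := by
  obtain ⟨-, w, hw, huw⟩ := h
  rw [← dotProduct_eq_zero_of_mem_ker_transpose hv hw]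
  refine Finset.sum_congr rfl fun s _ => ?_
  rw [show u s - x s = w s / c s from congrFun huw s]
  field_simp [hc s]

theorem eq_zero (h : IsWeightedProjection N c 0 u) (hc : ∀ s, 0 < c s) : u = 0 := by
  have hsum := h.sum_mul_sub_eq_zero (fun s => (hc s).ne') h.1
  simp only [Pi.zero_apply, sub_zero] at hsum
  funext s
  have := (Finset.sum_eq_zero_iff_of_nonneg fun t _ =>
    mul_assoc (c t) _ _ ▸ mul_nonneg (hc t).le (mul_self_nonneg (u t))).1 hsum s (Finset.mem_univ s)
  simpa [(hc s).ne'] using this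

end IsWeightedProjection

variable (N) in
theorem exists_isWeightedProjection {c : S → ℝ} (hc : ∀ s, 0 < c s) (x : S → ℝ) :
    ∃ u, IsWeightedProjection N c x u := by
  let K := LinearMap.ker Nᵀ.mulVecLin
  let W := LinearMap.range N.mulVecLin
  let F : K × W →ₗ[ℝ] S → ℝ := K.subtype.coprod (-(LinearMap.mulLeft ℝ c⁻¹ ∘ₗ W.subtype))
  have hF : ∀ p : K × W, F p = (p.1 : S → ℝ) - fun s => (p.2 : S → ℝ) s / c s := fun p => by
    ext s
    simp [F, div_eq_inv_mul, sub_eq_add_neg]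
  have hinj : Function.Injective F := by
    refine LinearMap.ker_eq_bot.1 (LinearMap.ker_eq_bot'.2 fun ⟨u, w⟩ hp => ?_)
    have huw := sub_eq_zero.1 ((hF _).symm.trans hp)
    have hu : (u : S → ℝ) = 0 := IsWeightedProjection.eq_zero ⟨u.2, w, w.2, by rwa [sub_zero]⟩ hc
    have hw : (w : S → ℝ) = 0 := funext fun s => by
      simpa [hu, (hc s).ne'] using (congrFun huw s).symm
    ext s <;> simp [hu, hw]
  have hdim : Module.finrank ℝ (K × W) = Module.finrank ℝ (S → ℝ) := by
    rw [Module.finrank_prod, Module.finrank_fintype_fun_eq_card,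
      finrank_ker_transpose_add_finrank_range]
  obtain ⟨⟨u, w⟩, hp⟩ := (LinearMap.injective_iff_surjective_of_finrank_eq_finrank hdim).1 hinj x
  refine ⟨u, u.2, w, w.2, ?_⟩
  rw [← hp, hF]
  abel

namespace IsWeightedProjection

variable {c x u v : S → ℝ}

theorem sum_mul_sq_sub_le (h : IsWeightedProjection N c x u) (hc : ∀ s, 0 < c s)
    (hv : v ∈ LinearMap.ker Nᵀ.mulVecLin) :
    ∑ s, c s * (v s - u s) ^ 2 ≤ ∑ s, c s * (v s - x s) ^ 2 := by
  have hcross := h.sum_mul_sub_eq_zero (fun s => (hc s).ne') (sub_mem hv h.1)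
  have hsplit : ∑ s, c s * (v s - x s) ^ 2 = ∑ s, c s * (v s - u s) ^ 2 +
      2 * ∑ s, c s * (v - u) s * (u s - x s) + ∑ s, c s * (u s - x s) ^ 2 := by
    simp only [Finset.mul_sum, ← Finset.sum_add_distrib, Pi.sub_apply]
    exact Finset.sum_congr rfl fun s _ => by ring
  have := Finset.sum_nonneg fun s (_ : s ∈ Finset.univ) =>
    mul_nonneg (hc s).le (sq_nonneg (u s - x s))
  linarith

theorem mul_sq_sub_le (h : IsWeightedProjection N c x u) (hc : ∀ s, 0 < c s)
    (hv : v ∈ LinearMap.ker Nᵀ.mulVecLin) {ε : ℝ} (hcε : ∀ s, v s ≠ x s → c s ≤ ε) (s : S) :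
    c s * (v s - u s) ^ 2 ≤ ε * ∑ t, (v t - x t) ^ 2 := calc
  c s * (v s - u s) ^ 2 ≤ ∑ t, c t * (v t - u t) ^ 2 :=
    Finset.single_le_sum (f := fun t => c t * (v t - u t) ^ 2)
      (fun t _ => mul_nonneg (hc t).le (sq_nonneg _)) (Finset.mem_univ s)
  _ ≤ ∑ t, c t * (v t - x t) ^ 2 := h.sum_mul_sq_sub_le hc hv
  _ ≤ ε * ∑ t, (v t - x t) ^ 2 := by
    rw [Finset.mul_sum]
    refine Finset.sum_le_sum fun t _ => ?_
    rcases eq_or_ne (v t) (x t) with hvx | hvx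
    · simp [hvx]
    · exact mul_le_mul_of_nonneg_right (hcε t hvx) (sq_nonneg _)

variable [DecidableEq S] {i : S}

theorem sum_mul_mul_eq (h : IsWeightedProjection N c (Pi.single i 1) u) (hc : ∀ s, c s ≠ 0)
    (hv : v ∈ LinearMap.ker Nᵀ.mulVecLin) : ∑ s, c s * v s * u s = c i * v i := by
  have := h.sum_mul_sub_eq_zero hc hv
  simp only [mul_sub, Finset.sum_sub_distrib] at this
  simpa [Pi.single_apply, sub_eq_zero] using this

theorem apply_le_one (h : IsWeightedProjection N c (Pi.single i 1) u) (hc : ∀ s, 0 < c s) :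
    u i ≤ 1 := by
  have hsum := h.sum_mul_mul_eq (fun s => (hc s).ne') h.1
  have hle : c i * u i * u i ≤ c i * u i := hsum ▸ Finset.single_le_sum
    (f := fun s => c s * u s * u s)
    (fun s _ => mul_assoc (c s) _ _ ▸ mul_nonneg (hc s).le (mul_self_nonneg _)) (Finset.mem_univ i)
  by_contra! hgt
  nlinarith [mul_pos (mul_pos (hc i) (zero_lt_one.trans hgt)) (sub_pos.2 hgt)]

theorem apply_pos_of_conforms (h : IsWeightedProjection N c (Pi.single i 1) u)
    (hc : ∀ s, 0 < c s) {e : S → ℝ} (he : e ∈ LinearMap.ker Nᵀ.mulVecLin) (he0 : e ≠ 0)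
    (heu : Conforms e u) : 0 < e i := by
  obtain ⟨s, hs⟩ := heu.exists_pos he0
  have hpos : 0 < ∑ s, c s * e s * u s := Finset.sum_pos'
    (fun t _ => mul_assoc (c t) _ _ ▸ mul_nonneg (hc t).le (heu.mul_nonneg t))
    ⟨s, Finset.mem_univ s, mul_assoc (c s) _ _ ▸ mul_pos (hc s) hs⟩
  rw [h.sum_mul_mul_eq (fun s => (hc s).ne') he] at hpos
  exact pos_of_mul_pos_right hpos (hc i).le

theorem apply_le (h : IsWeightedProjection N c (Pi.single i 1) u) (hc : ∀ s, 0 < c s) (o : S)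
    {M : ℝ} (hM0 : 0 ≤ M)
    (hM : ∀ e, IsElementary (LinearMap.ker Nᵀ.mulVecLin) e → e i = 1 → e o ≤ M) :
    u o ≤ M := by
  have key : u o ≤ M * u i := by
    refine AddSubmonoid.closure_induction (motive := fun v _ => v o ≤ M * v i) ?_ (by simp)
      (fun v w _ _ hv hw => by simp only [Pi.add_apply]; linarith)
      (mem_closure_isElementary_conforms h.1)
    rintro e ⟨he, heu⟩
    have hei := h.apply_pos_of_conforms hc he.1 he.2.1 heu
    have := hM _ (he.smul (inv_ne_zero hei.ne')) (by simp [hei.ne'])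
    rwa [Pi.smul_apply, smul_eq_mul, inv_mul_le_iff₀ hei, mul_comm] at this
  exact key.trans (mul_le_of_le_one_right hM0 (h.apply_le_one hc))

end IsWeightedProjection

end WeightedProjection

theorem exists_norm_le_mul_norm_restrict [Fintype S] {V : Submodule ℝ (S → ℝ)} {Z : Finset S}
    (hZ : ∀ v ∈ V, (∀ s ∈ Z, v s = 0) → v = 0) :
    ∃ C : ℝ, 0 < C ∧ ∀ v ∈ V, ‖v‖ ≤ C * ‖fun s : Z => v s‖ := by
  let f : V →ₗ[ℝ] Z → ℝ := (LinearMap.funLeft ℝ ℝ ((↑) : Z → S)).comp V.subtype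
  have hf : LinearMap.ker f = ⊥ := LinearMap.ker_eq_bot'.2 fun v hv =>
    Subtype.ext (hZ v v.2 fun s hs => congrFun hv ⟨s, hs⟩)
  obtain ⟨C, hC, hanti⟩ := f.exists_antilipschitzWith hf
  refine ⟨C, hC, fun v hv => ?_⟩
  have := hanti.le_mul_dist ⟨v, hv⟩ 0
  rw [map_zero, dist_zero_right, dist_zero_right] at this
  exact this

section Approximation

variable {R : Type*} [Fintype S] [DecidableEq S] [Fintype R] {N : Matrix S R ℝ} {i : S}

theorem IsElementary.exists_isWeightedProjection_sub_le_apply {ub : S → ℝ}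
    (hub : IsElementary (LinearMap.ker Nᵀ.mulVecLin) ub) (hubi : ub i = 1) (o : S) {δ : ℝ}
    (hδ : 0 < δ) : ∃ c u, (∀ s, 0 < c s) ∧ IsWeightedProjection N c (Pi.single i 1) u ∧
      ub o - δ ≤ u o := by
  classical
  let Z := Finset.univ.filter fun s => ub s = (Pi.single i 1 : S → ℝ) s
  obtain ⟨C, hC, hnorm⟩ := exists_norm_le_mul_norm_restrict (Z := Z) fun v hv hvZ => by
    refine hub.eq_zero_of_support_subset hv (fun s hs hus => hs (hvZ s ?_)) (i := i)
      (by simp [hubi]) (hvZ i (by simp [Z, hubi]))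
    have hsi : s ≠ i := by rintro rfl; simp [hubi] at hus
    simp [Z, hus, hsi]
  set b := δ / C
  set A := ∑ s, (ub s - (Pi.single i 1 : S → ℝ) s) ^ 2
  set ε := b ^ 2 / (A + 1)
  have hε : 0 < ε := by positivity
  let c : S → ℝ := fun s => if s ∈ Z then 1 else ε
  have hc : ∀ s, 0 < c s := fun s => by by_cases hs : s ∈ Z <;> simp [c, hs, hε]
  obtain ⟨u, hu⟩ := exists_isWeightedProjection N hc (Pi.single i 1)
  refine ⟨c, u, hc, hu, ?_⟩
  have hεA : ε * A ≤ b ^ 2 := by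
    rw [div_mul_eq_mul_div, div_le_iff₀ (by positivity)]
    nlinarith [sq_nonneg b]
  have hZ : ‖fun s : Z => (ub - u) s‖ ≤ b := by
    refine (pi_norm_le_iff_of_nonneg (by positivity)).2 fun ⟨s, hs⟩ => ?_
    have := hu.mul_sq_sub_le hc hub.1 (ε := ε) (fun t ht => by simp [c, Z, ht]) s
    rw [show c s = 1 by simp [c, hs], one_mul] at this
    exact abs_le_of_sq_le_sq (this.trans hεA) (by positivity)
  have := (norm_le_pi_norm (ub - u) o).trans ((hnorm _ (sub_mem hub.1 hu.1)).trans
    (mul_le_mul_of_nonneg_left hZ hC.le))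
  rw [Real.norm_eq_abs, Pi.sub_apply, mul_div_cancel₀ _ hC.ne'] at this
  linarith [le_abs_self (ub o - u o)]

theorem exists_isWeightedProjection_neg_le_apply {o : S} (hio : i ≠ o) {δ : ℝ} (hδ : 0 < δ) :
    ∃ c u, (∀ s, 0 < c s) ∧ IsWeightedProjection N c (Pi.single i 1) u ∧ -δ ≤ u o := by
  let c : S → ℝ := fun s => if s = i then δ ^ 2 else 1
  have hc : ∀ s, 0 < c s := fun s => by by_cases hs : s = i <;> simp [c, hs, hδ]
  obtain ⟨u, hu⟩ := exists_isWeightedProjection N hc (Pi.single i 1)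
  refine ⟨c, u, hc, hu, ?_⟩
  have := hu.mul_sq_sub_le hc (zero_mem _) (ε := δ ^ 2) (fun s hs => ?_) o
  · simp [c, hio.symm, Pi.single_apply, ite_pow] at this
    exact neg_le_of_abs_le (abs_le_of_sq_le_sq this hδ.le)
  · by_cases hsi : s = i
    · simp [c, hsi]
    · simp [hsi] at hs

end Approximation

end

/-- Lemma 3.9 (`lem:u_o`): the supremum of achievable values `u_o` is at least the supremum of
`u_o` over elementary vectors `u ∈ W^⊥` with `u_i = 1` (together with `0`). -/
theorem sup_ge_sup_elementary
    {S R : Type*} [Fintype S] [Fintype R] [DecidableEq S]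
    (N : Matrix S R ℝ) (i o : S) (hio : i ≠ o) :
    sSup ({x : ℝ | ∃ u : S → ℝ,
        IsElementary (LinearMap.ker Nᵀ.mulVecLin) u ∧ u i = 1 ∧ x = u o} ∪ {0}) ≤
    sSup {x : ℝ | ∃ u w cbar : S → ℝ,
        u ∈ LinearMap.ker Nᵀ.mulVecLin ∧
        w ∈ LinearMap.range N.mulVecLin ∧
        (∀ s, 0 < cbar s) ∧
        (u - Pi.single i 1 = fun s => w s / cbar s) ∧
        x = u o} := by
  obtain ⟨M, hM0, hM⟩ : ∃ M, 0 ≤ M ∧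
      ∀ e, IsElementary (LinearMap.ker Nᵀ.mulVecLin) e → e i = 1 → e o ≤ M := by
    obtain ⟨M, hM⟩ := ((IsElementary.finite_setOf_apply_eq_one _ i).image (· o)).bddAbove
    exact ⟨max M 0, le_max_right _ _,
      fun e he hei => (hM ⟨e, ⟨he, hei⟩, rfl⟩).trans (le_max_left _ _)⟩
  refine csSup_le ⟨0, Or.inr rfl⟩ fun x hx => le_of_forall_pos_le_add fun δ hδ => ?_
  obtain ⟨c, u, hc, ⟨hu, w, hw, huw⟩, hxu⟩ : ∃ c u, (∀ s, 0 < c s) ∧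
      IsWeightedProjection N c (Pi.single i 1) u ∧ x - δ ≤ u o := by
    rcases hx with ⟨e, he, hei, rfl⟩ | rfl
    · exact he.exists_isWeightedProjection_sub_le_apply hei o hδ
    · simpa using exists_isWeightedProjection_neg_le_apply hio hδ
  refine sub_le_iff_le_add.1 (hxu.trans (le_csSup ⟨M, ?_⟩ ⟨u, w, c, hu, hw, hc, huw, rfl⟩))
  rintro _ ⟨u, w, c, hu, hw, hc, huw, rfl⟩
  exact IsWeightedProjection.apply_le ⟨hu, w, hw, huw⟩ hc o hM0 hM
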